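/- Concatenating a shelling of K(V \ {v}) with the facets of the cone v * lk_K(v) ordered by a shelling of lk_K(v) yields a shelling of K, provided no facet of lk_K(v) is a facet of K(V \ {v}). -/

import Mathlib

open Finset

variable {V : Type*} [DecidableEq V]

/-- A (finite abstract) simplicial complex: a finset of finsets closed under subsets. -/
def IsComplex (K : Finset (Finset V)) : Prop :=
  ∀ F ∈ K, ∀ G ⊆ F, G ∈ K

/-- The facets (maximal faces) of a complex. -/
def facets (K : Finset (Finset V)) : Finset (Finset V) := by
  classical exact K.filter (fun F => ∀ G ∈ K, F ⊆ G → F = G)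

/-- `L` is a shelling order of the facets of `K`: for each `i ≥ 2` (0-indexed `i ≥ 1`),
the intersection of the closed simplex on `F_i` with the union of the previous closed simplices
is pure of dimension `dim F_i - 1`: every face `G` of the intersection is contained in a face `H`
of the intersection with `H.card = F_i.card - 1`. -/
def IsShelling (K : Finset (Finset V)) (L : List (Finset V)) : Prop :=
  L.Nodup ∧ L.toFinset = facets K ∧
  ∀ i : Fin L.length, i.1 ≠ 0 → ∀ G ⊆ L.get i,
    (∃ j : Fin L.length, j < i ∧ G ⊆ L.get j) →
    ∃ H, G ⊆ H ∧ H ⊆ L.get i ∧ H.card + 1 = (L.get i).card ∧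
      ∃ j : Fin L.length, j < i ∧ H ⊆ L.get j

/-- A complex is shellable if it admits a shelling order of its facets. -/
def Shellable (K : Finset (Finset V)) : Prop := ∃ L, IsShelling K L

/-- The subcomplex of `K` induced by a vertex subset `U`. -/
def inducedSub (K : Finset (Finset V)) (U : Finset V) : Finset (Finset V) :=
  K.filter (fun F => F ⊆ U)

/-- The vertex set of a complex. -/
def verts (K : Finset (Finset V)) : Finset V := K.sup id

/-- The link of a vertex `v` in `K`. -/
def link (K : Finset (Finset V)) (v : V) : Finset (Finset V) :=
  K.filter (fun F => v ∉ F ∧ insert v F ∈ K)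

/-- A complex is pure if all of its facets have the same dimension. -/
def IsPure (K : Finset (Finset V)) : Prop :=
  ∀ F ∈ facets K, ∀ G ∈ facets K, F.card = G.card

namespace Stmt9Aux

lemma mem_facets_iff (K : Finset (Finset V)) {F : Finset V} :
    F ∈ facets K ↔ F ∈ K ∧ ∀ G ∈ K, F ⊆ G → F = G := by
  simp [facets]

lemma facets_subset (K : Finset (Finset V)) : facets K ⊆ K := by
  intro F hF; exact ((mem_facets_iff K).1 hF).1

lemma exists_facet (K : Finset (Finset V)) {F : Finset V} (hF : F ∈ K) :
    ∃ G ∈ facets K, F ⊆ G := by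
  classical
  obtain ⟨H, hH, hmax⟩ := (K.filter (fun G => F ⊆ G)).exists_max_image Finset.card
    ⟨F, mem_filter.2 ⟨hF, Subset.rfl⟩⟩
  rw [mem_filter] at hH
  refine ⟨H, (mem_facets_iff K).2 ⟨hH.1, fun G hG hHG => ?_⟩, hH.2⟩
  exact Finset.eq_of_subset_of_card_le hHG (hmax G (mem_filter.2 ⟨hG, hH.2.trans hHG⟩))

lemma mem_del {K : Finset (Finset V)} {F : Finset V} {v : V} :
    F ∈ inducedSub K (verts K \ {v}) ↔ F ∈ K ∧ v ∉ F := by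
  simp only [inducedSub, mem_filter, and_congr_right_iff]
  intro hF
  constructor
  · intro h hv; exact (mem_sdiff.1 (h hv)).2 (mem_singleton_self v)
  · intro hv x hx
    refine mem_sdiff.2 ⟨Finset.le_sup (f := id) hF hx, ?_⟩
    simp only [mem_singleton]
    rintro rfl; exact hv hx

lemma mem_link {K : Finset (Finset V)} {F : Finset V} {v : V} :
    F ∈ link K v ↔ F ∈ K ∧ v ∉ F ∧ insert v F ∈ K := by
  simp [link]

lemma link_mem_del {K : Finset (Finset V)} {v : V} {F : Finset V} (hF : F ∈ link K v) :
    F ∈ inducedSub K (verts K \ {v}) := by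
  rw [mem_link] at hF
  exact mem_del.2 ⟨hF.1, hF.2.1⟩

/-- No facet of the link is a facet of the deletion ⇒ facets of deletion = facets of K
not containing v. -/
lemma facets_del_iff {K : Finset (Finset V)} (hK : IsComplex K) {v : V}
    (hfac : ∀ F ∈ facets (link K v), F ∉ facets (inducedSub K (verts K \ {v})))
    {F : Finset V} :
    F ∈ facets (inducedSub K (verts K \ {v})) ↔ F ∈ facets K ∧ v ∉ F := by
  rw [mem_facets_iff, mem_facets_iff, mem_del]
  constructor
  · rintro ⟨⟨hFK, hvF⟩, hmax⟩
    refine ⟨⟨hFK, fun G hG hFG => ?_⟩, hvF⟩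
    by_cases hvG : v ∈ G
    · -- show this case is impossible
      exfalso
      have hGe : G.erase v ∈ K := hK G hG _ (erase_subset v G)
      have hFGe : F = G.erase v :=
        hmax _ (mem_del.2 ⟨hGe, notMem_erase v G⟩) (subset_erase.2 ⟨hFG, hvF⟩)
      have hFl : F ∈ link K v := by
        rw [mem_link]
        refine ⟨hFK, hvF, ?_⟩
        rw [hFGe, insert_erase hvG]; exact hG
      obtain ⟨H, hH, hFH⟩ := exists_facet (link K v) hFl
      have : F = H := hmax _ (link_mem_del (facets_subset _ hH)) hFH
      exact hfac H hH ((mem_facets_iff _).2 (this ▸ ⟨mem_del.2 ⟨hFK, hvF⟩, hmax⟩))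
    · exact hmax G (mem_del.2 ⟨hG, hvG⟩) hFG
  · rintro ⟨⟨hFK, hmax⟩, hvF⟩
    exact ⟨⟨hFK, hvF⟩, fun G hG hFG => hmax G (mem_del.1 hG).1 hFG⟩

lemma insert_facet_link {K : Finset (Finset V)} (hK : IsComplex K) {v : V} {F : Finset V}
    (hF : F ∈ facets (link K v)) : insert v F ∈ facets K := by
  rw [mem_facets_iff] at hF ⊢
  obtain ⟨hFl, hmax⟩ := hF
  rw [mem_link] at hFl
  refine ⟨hFl.2.2, fun G hG hFG => ?_⟩
  have hvG : v ∈ G := hFG (mem_insert_self v F)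
  have hGe : G.erase v ∈ link K v := by
    rw [mem_link]
    exact ⟨hK G hG _ (erase_subset v G), notMem_erase v G, by rw [insert_erase hvG]; exact hG⟩
  have hFGe : F ⊆ G.erase v :=
    subset_erase.2 ⟨(subset_insert v F).trans hFG, hFl.2.1⟩
  have := hmax _ hGe hFGe
  rw [this, insert_erase hvG]

lemma erase_facet {K : Finset (Finset V)} (hK : IsComplex K) {v : V} {F : Finset V}
    (hF : F ∈ facets K) (hvF : v ∈ F) : F.erase v ∈ facets (link K v) := by
  rw [mem_facets_iff] at hF ⊢
  obtain ⟨hFK, hmax⟩ := hF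
  refine ⟨mem_link.2 ⟨hK F hFK _ (erase_subset v F), notMem_erase v F,
    by rw [insert_erase hvF]; exact hFK⟩, fun G hG hFG => ?_⟩
  rw [mem_link] at hG
  have hFiG : F ⊆ insert v G := by
    intro x hx
    by_cases hxv : x = v
    · exact hxv ▸ mem_insert_self v G
    · exact mem_insert_of_mem (hFG (mem_erase.2 ⟨hxv, hx⟩))
  have := hmax _ hG.2.2 hFiG
  rw [this, erase_insert hG.2.1]

lemma facets_eq {K : Finset (Finset V)} (hK : IsComplex K) {v : V}
    (hfac : ∀ F ∈ facets (link K v), F ∉ facets (inducedSub K (verts K \ {v}))) :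
    facets K = facets (inducedSub K (verts K \ {v})) ∪ (facets (link K v)).image (insert v) := by
  ext F
  rw [mem_union, mem_image, facets_del_iff hK hfac]
  constructor
  · intro hF
    by_cases hvF : v ∈ F
    · exact Or.inr ⟨F.erase v, erase_facet hK hF hvF, insert_erase hvF⟩
    · exact Or.inl ⟨hF, hvF⟩
  · rintro (⟨hF, _⟩ | ⟨G, hG, rfl⟩)
    · exact hF
    · exact insert_facet_link hK hG

end Stmt9Aux

open Stmt9Aux in
/-- Concatenating a shelling of the deletion `K(V \\ {v})` with the facets of the cone
`v * lk v` ordered by a shelling of the link yields a shelling of `K`, provided no facet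
of the link is a facet of the deletion. -/
theorem stmt9 (K : Finset (Finset V)) (hK : IsComplex K) (v : V) (hv : v ∈ verts K)
    (L1 L2 : List (Finset V))
    (h1 : IsShelling (inducedSub K (verts K \ {v})) L1)
    (h2 : IsShelling (link K v) L2)
    (hfac : ∀ F ∈ facets (link K v), F ∉ facets (inducedSub K (verts K \ {v}))) :
    IsShelling K (L1 ++ L2.map (insert v)) := by
  classical
  obtain ⟨hnd1, htf1, hsh1⟩ := h1
  obtain ⟨hnd2, htf2, hsh2⟩ := h2
  -- basic membership facts
  have hmem1 : ∀ F ∈ L1, F ∈ facets (inducedSub K (verts K \ {v})) := by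
    intro F hF; rw [← htf1]; exact List.mem_toFinset.2 hF
  have hmem2 : ∀ F ∈ L2, F ∈ facets (link K v) := by
    intro F hF; rw [← htf2]; exact List.mem_toFinset.2 hF
  have hv1 : ∀ F ∈ L1, v ∉ F := fun F hF => (mem_del.1 (facets_subset _ (hmem1 F hF))).2
  have hv2 : ∀ F ∈ L2, v ∉ F := fun F hF => (mem_link.1 (facets_subset _ (hmem2 F hF))).2.1
  refine ⟨?_, ?_, ?_⟩
  · -- Nodup
    rw [List.nodup_append]
    refine ⟨hnd1, hnd2.map_on ?_, ?_⟩
    · intro x hx y hy hxy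
      have : (insert v x).erase v = (insert v y).erase v := by rw [hxy]
      rwa [erase_insert (hv2 x hx), erase_insert (hv2 y hy)] at this
    · intro F hF1 F' hF2 hFF
      obtain ⟨G, hG, rfl⟩ := List.mem_map.1 hF2
      subst hFF
      exact hv1 _ hF1 (mem_insert_self v G)
  · -- toFinset
    rw [List.toFinset_append, facets_eq hK hfac, htf1]
    congr 1
    rw [← htf2]
    ext F
    simp [List.mem_map]
  · -- shelling condition
    simp only [List.get_eq_getElem] at hsh1 hsh2
    intro i hi0 G hGi hGprev
    simp only [List.get_eq_getElem] at hGi hGprev ⊢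
    have hlen : (L1 ++ L2.map (insert v)).length = L1.length + L2.length := by
      simp
    by_cases hiL : i.1 < L1.length
    · -- Case A: within L1
      obtain ⟨j, hji, hGj⟩ := hGprev
      have hjL : j.1 < L1.length := lt_trans hji hiL
      rw [List.getElem_append_left hiL] at hGi
      rw [List.getElem_append_left hjL] at hGj
      obtain ⟨H, hGH, hHi, hcard, j', hj'i, hHj'⟩ :=
        hsh1 ⟨i.1, hiL⟩ hi0 G hGi ⟨⟨j.1, hjL⟩, hji, hGj⟩
      rw [List.getElem_append_left hiL]
      refine ⟨H, hGH, hHi, hcard,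
        ⟨j'.1, lt_of_lt_of_le j'.2 (hlen ▸ Nat.le_add_right _ _)⟩, hj'i, ?_⟩
      rw [List.getElem_append_left j'.2]
      exact hHj'
    · -- Case B: within the cone part
      push_neg at hiL
      have hik : i.1 - L1.length < L2.length := by
        have h := lt_of_lt_of_eq i.2 hlen; omega
      have hgeti : (L1 ++ L2.map (insert v))[i.1] = insert v L2[i.1 - L1.length] := by
        rw [List.getElem_append_right hiL, List.getElem_map]
      set k := i.1 - L1.length with hk
      have hvk : v ∉ L2[k] := hv2 _ (List.getElem_mem _)
      rw [hgeti] at hGi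
      rw [hgeti]
      by_cases hcase : ∃ j' : Fin L2.length, j'.1 < k ∧ G.erase v ⊆ L2[j'.1]
      · -- Case B1: use the link shelling
        obtain ⟨j', hj'k, hsub⟩ := hcase
        have hk0 : k ≠ 0 := by omega
        have hGe : G.erase v ⊆ L2[k] := by
          have := erase_subset_erase v hGi
          rwa [erase_insert hvk] at this
        obtain ⟨H', hGH', hH'k, hcard', j'', hj''k, hH'j''⟩ :=
          hsh2 ⟨k, hik⟩ hk0 (G.erase v) hGe ⟨j', hj'k, hsub⟩
        have hvH' : v ∉ H' := fun h => hvk (hH'k h)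
        simp only [List.get_eq_getElem] at hH'k hH'j'' hcard'
        refine ⟨insert v H', ?_, insert_subset_insert v hH'k, ?_, ?_⟩
        · intro x hx
          by_cases hxv : x = v
          · exact hxv ▸ mem_insert_self v H'
          · exact mem_insert_of_mem (hGH' (mem_erase.2 ⟨hxv, hx⟩))
        · rw [card_insert_of_notMem hvH', card_insert_of_notMem hvk]
          omega
        · refine ⟨⟨L1.length + j''.1, by rw [hlen]; omega⟩, ?_, ?_⟩
          · show L1.length + j''.1 < i.1
            have : j''.1 < k := hj''k
            omega
          · rw [List.getElem_append_right (Nat.le_add_right _ _), List.getElem_map]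
            simp only [Nat.add_sub_cancel_left]
            exact insert_subset_insert v hH'j''
      · -- Case B2: G comes from the deletion part; use L2[k] itself
        push_neg at hcase
        obtain ⟨j, hji, hGj⟩ := hGprev
        have hjL : j.1 < L1.length := by
          by_contra hjge
          push_neg at hjge
          have hjk : j.1 - L1.length < k := by
            have : j.1 < i.1 := hji
            omega
          have hjk2 : j.1 - L1.length < L2.length := by omega
          rw [List.getElem_append_right hjge, List.getElem_map] at hGj
          have hvj : v ∉ L2[j.1 - L1.length] := hv2 _ (List.getElem_mem _)
          have : G.erase v ⊆ L2[j.1 - L1.length] := by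
            have := erase_subset_erase v hGj
            rwa [erase_insert hvj] at this
          exact absurd this (hcase ⟨j.1 - L1.length, hjk2⟩ hjk)
        rw [List.getElem_append_left hjL] at hGj
        have hvG : v ∉ G := fun h => hv1 _ (List.getElem_mem _) (hGj h)
        have hGk : G ⊆ L2[k] := by
          intro x hx
          rcases mem_insert.1 (hGi hx) with h | h
          · exact absurd (h ▸ hx) hvG
          · exact h
        -- L2[k] is a face of the deletion, hence contained in some facet = some L1 entry
        have hkD : L2[k] ∈ inducedSub K (verts K \ {v}) :=
          link_mem_del (facets_subset _ (hmem2 _ (List.getElem_mem _)))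
        obtain ⟨Fm, hFm, hkFm⟩ := exists_facet _ hkD
        have : Fm ∈ L1 := by
          rw [← List.mem_toFinset, htf1]; exact hFm
        obtain ⟨j', hj', hFj'⟩ := List.mem_iff_getElem.1 this
        refine ⟨L2[k], hGk, subset_insert v _, ?_, ⟨j', by rw [hlen]; omega⟩, ?_, ?_⟩
        · rw [card_insert_of_notMem hvk]
        · show j' < i.1; omega
        · rw [List.getElem_append_left hj', hFj']
          exact hkFm
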